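/- The Lovász theta number of the circulant graph $Ci_8(1,4)$ equals $2 + \sqrt{2}$. -/

import Mathlib

/-!
Weak duality: if `Z` is positive semidefinite, `Z i i + 2 Z 0 i = -1` for every vertex `i` and
`Z i j = 0` for distinct non-adjacent `i, j`, then every feasible `X` satisfies
`0 ≤ tr (Z X) = Z 0 0 - ∑ i, X i i`. For `Ci₈(1,4)` both the primal matrix and the dual
certificate are circulant on the vertices, i.e. combinations of the real Fourier modes
`cos (2π m (i - j) / 8)` of `ZMod 8`: the primal one uses the frequencies `3` and `4`, the dual one
the frequencies `1` and `2`, and both have value `2 + √2`.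
-/

open Matrix Real

theorem Matrix.PosSemidef.trace_mul_nonneg {n : Type*} [Fintype n] {A B : Matrix n n ℝ}
    (hA : A.PosSemidef) (hB : B.PosSemidef) : 0 ≤ (A * B).trace := by
  obtain ⟨m, v, rfl⟩ := Matrix.posSemidef_iff_eq_sum_vecMulVec.mp hA
  rw [Finset.sum_mul, trace_sum]
  refine Finset.sum_nonneg fun k _ => ?_
  rw [trace_mul_comm]
  convert hB.dotProduct_mulVec_nonneg (v k) using 1
  simp only [trace, star_trivial, diag_apply, mul_apply, vecMulVec_apply, dotProduct, Pi.star_apply,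
    mulVec, Finset.mul_sum]
  exact Finset.sum_congr rfl fun _ _ => Finset.sum_congr rfl fun _ _ => by ring

namespace LovaszTheta

structure IsThetaFeasible {V : Type*} (Adj : V → V → Prop)
    (X : Matrix (Fin 1 ⊕ V) (Fin 1 ⊕ V) ℝ) : Prop where
  posSemidef : X.PosSemidef
  apex : X (.inl 0) (.inl 0) = 1
  diag_eq : ∀ i, X (.inr i) (.inr i) = X (.inl 0) (.inr i)
  eq_zero_of_adj : ∀ i j, Adj i j → X (.inr i) (.inr j) = 0

theorem IsThetaFeasible.sum_diag_le {V : Type*} [Fintype V]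
    {Adj : V → V → Prop} {X Z : Matrix (Fin 1 ⊕ V) (Fin 1 ⊕ V) ℝ}
    (hX : IsThetaFeasible Adj X) (hZ : Z.PosSemidef)
    (hZdiag : ∀ i, Z (.inr i) (.inr i) + 2 * Z (.inl 0) (.inr i) = -1)
    (hZoff : ∀ i j, i ≠ j → ¬ Adj i j → Z (.inr i) (.inr j) = 0) :
    ∑ i, X (.inr i) (.inr i) ≤ Z (.inl 0) (.inl 0) := by
  have entry_symm {M : Matrix (Fin 1 ⊕ V) (Fin 1 ⊕ V) ℝ} (hM : M.PosSemidef) a b :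
      M a b = M b a := by
    simpa using (hM.isHermitian.apply a b).symm
  have row (i : V) : ∑ j, Z (.inr i) (.inr j) * X (.inr j) (.inr i) =
      Z (.inr i) (.inr i) * X (.inr i) (.inr i) := by
    refine Finset.sum_eq_single i (fun j _ hji => ?_) (by simp)
    by_cases hadj : Adj j i
    · rw [hX.eq_zero_of_adj j i hadj, mul_zero]
    · rw [entry_symm hZ, hZoff j i hji hadj, zero_mul]
  have htrace : (Z * X).trace = Z (.inl 0) (.inl 0) - ∑ i, X (.inr i) (.inr i) := by
    simp only [trace, diag_apply, mul_apply, Fintype.sum_sum_type, Fin.sum_univ_one, row,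
      hX.apex, entry_symm hX.posSemidef (.inr _) (.inl 0),
      entry_symm hZ (.inr _) (.inl 0)]
    rw [mul_one, add_assoc, ← Finset.sum_add_distrib, sub_eq_add_neg, ← Finset.sum_neg_distrib]
    refine congrArg _ (Finset.sum_congr rfl fun i _ => ?_)
    rw [← hX.diag_eq]
    linear_combination X (.inr i) (.inr i) * hZdiag i
  linarith [hZ.trace_mul_nonneg hX.posSemidef]

section FourierMode

variable {n : ℕ}

noncomputable def cosZMod (k : ZMod n) : ℝ := cos (2 * π * k.val / n)

noncomputable def sinZMod (k : ZMod n) : ℝ := sin (2 * π * k.val / n)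

theorem cosZMod_sub [NeZero n] (a b : ZMod n) :
    cosZMod (a - b) = cosZMod a * cosZMod b + sinZMod a * sinZMod b := by
  have hcast : (((a - b).val : ℤ) : ZMod n) = ((a.val - b.val : ℤ) : ZMod n) := by
    push_cast
    simp only [ZMod.natCast_zmod_val]
  obtain ⟨t, ht⟩ := (ZMod.intCast_eq_intCast_iff_dvd_sub _ _ _).mp hcast
  have hn : (n : ℝ) ≠ 0 := Nat.cast_ne_zero.mpr (NeZero.ne n)
  have hangle :
      2 * π * (a - b).val / n = 2 * π * a.val / n - 2 * π * b.val / n - t * (2 * π) := by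
    have ht' : (a.val : ℝ) - b.val - (a - b).val = n * t := by exact_mod_cast ht
    field_simp
    linear_combination -ht'
  rw [cosZMod, hangle, cos_sub_int_mul_two_pi, cos_sub, cosZMod, cosZMod, sinZMod, sinZMod]

theorem cosZMod_zero : cosZMod (0 : ZMod n) = 1 := by simp [cosZMod]

theorem sinZMod_zero : sinZMod (0 : ZMod n) = 0 := by simp [sinZMod]

theorem cosZMod_neg [NeZero n] (a : ZMod n) : cosZMod (-a) = cosZMod a := by
  rw [← zero_sub, cosZMod_sub, cosZMod_zero, sinZMod_zero]
  ring

noncomputable def cosMode (m : ZMod n) : Fin 1 ⊕ ZMod n → ℝ :=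
  Sum.elim 0 fun k => cosZMod (m * k)

noncomputable def sinMode (m : ZMod n) : Fin 1 ⊕ ZMod n → ℝ :=
  Sum.elim 0 fun k => sinZMod (m * k)

noncomputable def fourierMode (m : ZMod n) : Matrix (Fin 1 ⊕ ZMod n) (Fin 1 ⊕ ZMod n) ℝ :=
  vecMulVec (cosMode m) (cosMode m) + vecMulVec (sinMode m) (sinMode m)

theorem fourierMode_posSemidef [NeZero n] (m : ZMod n) : (fourierMode m).PosSemidef :=
  (posSemidef_vecMulVec_self_star _).add (posSemidef_vecMulVec_self_star _)

@[simp]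
theorem fourierMode_inl_left (m : ZMod n) (k : Fin 1) (a : Fin 1 ⊕ ZMod n) :
    fourierMode m (.inl k) a = 0 := by
  simp [fourierMode, cosMode, sinMode, vecMulVec_apply]

@[simp]
theorem fourierMode_inl_right (m : ZMod n) (a : Fin 1 ⊕ ZMod n) (k : Fin 1) :
    fourierMode m a (.inl k) = 0 := by
  simp [fourierMode, cosMode, sinMode, vecMulVec_apply]

theorem fourierMode_inr_inr [NeZero n] (m i j : ZMod n) :
    fourierMode m (.inr i) (.inr j) = cosZMod (m * (i - j)) := by
  simp [fourierMode, cosMode, sinMode, vecMulVec_apply, mul_sub, cosZMod_sub]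

end FourierMode

theorem cosZMod_two : cosZMod (2 : ZMod 8) = 0 := by
  rw [cosZMod, show (2 : ZMod 8).val = 2 from rfl, ← cos_pi_div_two]
  congr 1
  push_cast
  ring

theorem cosZMod_three : cosZMod (3 : ZMod 8) = -(√2 / 2) := by
  rw [cosZMod, show (3 : ZMod 8).val = 3 from rfl, ← cos_pi_div_four, ← cos_pi_sub]
  congr 1
  push_cast
  ring

theorem cosZMod_four : cosZMod (4 : ZMod 8) = -1 := by
  rw [cosZMod, show (4 : ZMod 8).val = 4 from rfl, ← cos_pi]
  congr 1
  push_cast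
  ring

theorem cosZMod_five : cosZMod (5 : ZMod 8) = -(√2 / 2) := by
  rw [show (5 : ZMod 8) = -3 from rfl, cosZMod_neg, cosZMod_three]

theorem cosZMod_six : cosZMod (6 : ZMod 8) = 0 := by
  rw [show (6 : ZMod 8) = -2 from rfl, cosZMod_neg, cosZMod_two]

def ci8Adj (i j : ZMod 8) : Prop := i - j = 1 ∨ i - j = 4 ∨ i - j = 7

def apexVec {V : Type*} (a b : ℝ) : Fin 1 ⊕ V → ℝ := Sum.elim (fun _ => a) fun _ => b

theorem sqrt_two_sq : √2 ^ 2 = 2 := sq_sqrt zero_le_two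

noncomputable def primalMatrix : Matrix (Fin 1 ⊕ ZMod 8) (Fin 1 ⊕ ZMod 8) ℝ :=
  vecMulVec (apexVec 1 ((2 + √2) / 8)) (apexVec 1 ((2 + √2) / 8)) +
    (1 / 32 : ℝ) • fourierMode 4 + ((2 + √2) / 16) • fourierMode 3

theorem primalMatrix_inl_inr (i : ZMod 8) : primalMatrix (.inl 0) (.inr i) = (2 + √2) / 8 := by
  simp [primalMatrix, apexVec, vecMulVec_apply]

theorem primalMatrix_inr_inr (i j : ZMod 8) :
    primalMatrix (.inr i) (.inr j) =
      ((2 + √2) / 8) ^ 2 + cosZMod (4 * (i - j)) / 32 +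
        (2 + √2) / 16 * cosZMod (3 * (i - j)) := by
  simp only [primalMatrix, apexVec, Matrix.add_apply, vecMulVec_apply, Sum.elim_inr,
    Matrix.smul_apply, fourierMode_inr_inr, smul_eq_mul]
  ring

theorem primalMatrix_isThetaFeasible : IsThetaFeasible ci8Adj primalMatrix where
  posSemidef := ((posSemidef_vecMulVec_self_star _).add
    ((fourierMode_posSemidef 4).smul (by norm_num))).add
    ((fourierMode_posSemidef 3).smul (by positivity))
  apex := by simp [primalMatrix, apexVec, vecMulVec_apply]
  diag_eq i := by
    simp only [primalMatrix_inr_inr, primalMatrix_inl_inr, sub_self, mul_zero, cosZMod_zero]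
    linear_combination (1 / 64) * sqrt_two_sq
  eq_zero_of_adj i j hij := by
    rw [primalMatrix_inr_inr]
    rcases hij with h | h | h <;> rw [h] <;> reduce_mod_char
    · rw [cosZMod_four, cosZMod_three]
      linear_combination (-1 / 64) * sqrt_two_sq
    · rw [cosZMod_zero, cosZMod_four]
      linear_combination (1 / 64) * sqrt_two_sq
    · rw [cosZMod_four, cosZMod_five]
      linear_combination (-1 / 64) * sqrt_two_sq

theorem primalMatrix_sum_diag : ∑ i, primalMatrix (.inr i) (.inr i) = 2 + √2 := by
  simp only [primalMatrix_isThetaFeasible.diag_eq, primalMatrix_inl_inr, Finset.sum_const,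
    Finset.card_univ, ZMod.card, nsmul_eq_mul]
  ring

noncomputable def dualMatrix : Matrix (Fin 1 ⊕ ZMod 8) (Fin 1 ⊕ ZMod 8) ℝ :=
  ((2 - √2) / 2) • vecMulVec (apexVec (2 + √2) (-1)) (apexVec (2 + √2) (-1)) +
    (√2 - 1) • fourierMode 1 + ((2 - √2) / 2) • fourierMode 2

theorem dualMatrix_posSemidef : dualMatrix.PosSemidef := by
  have h1 : 1 ≤ √2 := one_le_sqrt.mpr one_le_two
  have h2 : √2 ≤ 2 := by nlinarith [sqrt_two_sq]
  exact (((posSemidef_vecMulVec_self_star _).smul (by linarith)).add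
    ((fourierMode_posSemidef 1).smul (by linarith))).add
    ((fourierMode_posSemidef 2).smul (by linarith))

theorem dualMatrix_apex : dualMatrix (.inl 0) (.inl 0) = 2 + √2 := by
  simp only [dualMatrix, apexVec, Matrix.add_apply, Matrix.smul_apply, vecMulVec_apply,
    Sum.elim_inl, smul_eq_mul, fourierMode_inl_right, mul_zero, add_zero]
  linear_combination (-(2 + √2) / 2) * sqrt_two_sq

theorem dualMatrix_inl_inr (i : ZMod 8) : dualMatrix (.inl 0) (.inr i) = -1 := by
  simp only [dualMatrix, apexVec, Matrix.add_apply, Matrix.smul_apply, vecMulVec_apply,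
    Sum.elim_inl, Sum.elim_inr, smul_eq_mul, fourierMode_inl_left, mul_zero, add_zero]
  linear_combination (1 / 2) * sqrt_two_sq

theorem dualMatrix_inr_inr (i j : ZMod 8) : dualMatrix (.inr i) (.inr j) =
    (2 - √2) / 2 + (√2 - 1) * cosZMod (i - j) + (2 - √2) / 2 * cosZMod (2 * (i - j)) := by
  simp [dualMatrix, apexVec, vecMulVec_apply, fourierMode_inr_inr]

theorem dualMatrix_diag (i : ZMod 8) :
    dualMatrix (.inr i) (.inr i) + 2 * dualMatrix (.inl 0) (.inr i) = -1 := by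
  simp only [dualMatrix_inr_inr, dualMatrix_inl_inr, sub_self, mul_zero, cosZMod_zero]
  ring

theorem dualMatrix_eq_zero_of_not_adj (i j : ZMod 8) (hne : i ≠ j) (hadj : ¬ ci8Adj i j) :
    dualMatrix (.inr i) (.inr j) = 0 := by
  have hd : i - j = 2 ∨ i - j = 3 ∨ i - j = 5 ∨ i - j = 6 := by
    have key : ∀ d : ZMod 8, d ≠ 0 → ¬ (d = 1 ∨ d = 4 ∨ d = 7) →
        d = 2 ∨ d = 3 ∨ d = 5 ∨ d = 6 := by decide
    exact key _ (sub_ne_zero.mpr hne) hadj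
  rw [dualMatrix_inr_inr]
  rcases hd with h | h | h | h <;> rw [h] <;> reduce_mod_char
  · rw [cosZMod_two, cosZMod_four]
    ring
  · rw [cosZMod_three, cosZMod_six]
    linear_combination (-1 / 2) * sqrt_two_sq
  · rw [cosZMod_five, cosZMod_two]
    linear_combination (-1 / 2) * sqrt_two_sq
  · rw [cosZMod_six, cosZMod_four]
    ring

theorem IsThetaFeasible.sum_diag_le_ci8 {X : Matrix (Fin 1 ⊕ ZMod 8) (Fin 1 ⊕ ZMod 8) ℝ}
    (hX : IsThetaFeasible ci8Adj X) : ∑ i, X (.inr i) (.inr i) ≤ 2 + √2 :=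
  dualMatrix_apex ▸ hX.sum_diag_le dualMatrix_posSemidef dualMatrix_diag
    dualMatrix_eq_zero_of_not_adj

end LovaszTheta

open LovaszTheta in
theorem lovasz_theta_Ci8_1_4 :
    IsGreatest
      {s : ℝ | ∃ X : Matrix (Fin 1 ⊕ ZMod 8) (Fin 1 ⊕ ZMod 8) ℝ,
        X.PosSemidef ∧
        X (Sum.inl 0) (Sum.inl 0) = 1 ∧
        (∀ i, X (Sum.inr i) (Sum.inr i) = X (Sum.inl 0) (Sum.inr i)) ∧
        (∀ i j : ZMod 8, (i - j = 1 ∨ i - j = 4 ∨ i - j = 7) →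
          X (Sum.inr i) (Sum.inr j) = 0) ∧
        s = ∑ i, X (Sum.inr i) (Sum.inr i)}
      (2 + Real.sqrt 2) := by
  constructor
  · obtain ⟨hpsd, hapex, hdiag, hadj⟩ := primalMatrix_isThetaFeasible
    exact ⟨primalMatrix, hpsd, hapex, hdiag, hadj, primalMatrix_sum_diag.symm⟩
  · rintro _ ⟨X, hpsd, hapex, hdiag, hadj, rfl⟩
    exact IsThetaFeasible.sum_diag_le_ci8 ⟨hpsd, hapex, hdiag, hadj⟩
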